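/- For each large t, let x_c = x_c(t) denote the location of the maximum of x ↦ h(x,t), and set κ_t := -∂²h/∂x²|_{x=x_c} and d_t := (1/3!)·∂³h/∂x³|_{x=x_c}. Then as t → ∞: x_c ~ t·∏_{k=1}^n (log^{(k)} t)^{-1}, κ_t ~ (log^{(n)} t)/(α·t)·∏_{k=1}^n log^{(k)} t (equivalently κ_t ~ log^{(n)}(t)/(α·x_c)), and d_t ~ (log^{(n)} t)/(3α·t²)·∏_{k=1}^n (log^{(k)} t)². -/

import Mathlib

open Filter

noncomputable section

/-- `iterLog n` is the `n`-fold iterated natural logarithm, `log^{(0)}(x) = x`. -/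
def iterLog : ℕ → ℝ → ℝ
  | 0, x => x
  | n + 1, x => Real.log (iterLog n x)

/-- Condition (A1): `L(x)/x^ε → 0` and `1/(L(x) x^ε) → 0` as `x → ∞`, for every `ε > 0`. -/
def CondA1 (L : ℝ → ℝ) : Prop :=
  ∀ ε : ℝ, 0 < ε →
    Tendsto (fun x => L x / x ^ ε) atTop (nhds 0) ∧
    Tendsto (fun x => 1 / (L x * x ^ ε)) atTop (nhds 0)

/-- Condition (A2): `L(x ℓ(x))/L(x) → 1` for every positive `ℓ` satisfying (A1). -/
def CondA2 (L : ℝ → ℝ) : Prop :=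
  ∀ ℓ : ℝ → ℝ, (∀ x, 0 < ℓ x) → CondA1 ℓ →
    Tendsto (fun x => L (x * ℓ x) / L x) atTop (nhds 1)

/-- The operator `d/d(log x)`, i.e. `g ↦ x g'(x)`. -/
def logDerivOp (g : ℝ → ℝ) : ℝ → ℝ := fun x => x * deriv g x

/-- Condition (A4): `(d/d log x)^j log L(x^γ) → 0` for every `j ∈ ℕ` and `γ > 0`. -/
def CondA4 (L : ℝ → ℝ) : Prop :=
  ∀ (j : ℕ) (γ : ℝ), 0 < γ →
    Tendsto (logDerivOp^[j] (fun x => Real.log (L (x ^ γ)))) atTop (nhds 0)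

/-- `ω_W(y) = (log y / α)^{δ_{n,1}/α} · L(y^{1/α})^{-1/α}`. -/
def omegaW (n : ℕ) (α : ℝ) (L : ℝ → ℝ) (y : ℝ) : ℝ :=
  (Real.log y / α) ^ ((if n = 1 then (1 : ℝ) else 0) / α) * (L (y ^ (1 / α))) ^ (-(1 / α))

/-- `u_n(t) = (log^{(n-1)} t)^{1/α} · ω_W(log^{(n-1)} t)`. -/
def un (n : ℕ) (α : ℝ) (L : ℝ → ℝ) (t : ℝ) : ℝ :=
  (iterLog (n - 1) t) ^ (1 / α) * omegaW n α L (iterLog (n - 1) t)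

lemma iterLog_succ (k : ℕ) (x : ℝ) : iterLog (k+1) x = Real.log (iterLog k x) := rfl

lemma iterLog_zero (x : ℝ) : iterLog 0 x = x := rfl

lemma tendsto_iterLog (k : ℕ) : Tendsto (iterLog k) atTop atTop := by
  induction k with
  | zero => exact tendsto_id
  | succ k ih => exact Real.tendsto_log_atTop.comp ih

lemma iterLog_ev_gt (k : ℕ) (c : ℝ) : ∀ᶠ x in atTop, c < iterLog k x :=
  (tendsto_iterLog k).eventually_gt_atTop c

/-- All iterated logs up to level `m` are `> 1` eventually. -/
lemma iterLog_ev_all (m : ℕ) : ∀ᶠ x in atTop, ∀ k ≤ m, 1 < iterLog k x := by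
  have : ∀ᶠ x in atTop, ∀ k ∈ Finset.range (m+1), 1 < iterLog k x :=
    (eventually_all_finset _).2 fun k _ => iterLog_ev_gt k 1
  filter_upwards [this] with x hx k hk
  exact hx k (Finset.mem_range.2 (by omega))

def Qf (m : ℕ) (x : ℝ) : ℝ := ∏ k ∈ Finset.range m, iterLog k x

def Sf (m : ℕ) (x : ℝ) : ℝ := ∑ k ∈ Finset.range m, (Qf (k+1) x)⁻¹

def Tf (m : ℕ) (x : ℝ) : ℝ := ∑ k ∈ Finset.range m, Sf (k+1) x * (Qf (k+1) x)⁻¹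

lemma Qf_zero (x : ℝ) : Qf 0 x = 1 := by simp [Qf]

lemma Qf_succ (m : ℕ) (x : ℝ) : Qf (m+1) x = Qf m x * iterLog m x := by
  simp [Qf, Finset.prod_range_succ]

lemma Qf_one (x : ℝ) : Qf 1 x = x := by simp [Qf, iterLog_zero]

lemma Sf_zero (x : ℝ) : Sf 0 x = 0 := by simp [Sf]

lemma Tf_zero (x : ℝ) : Tf 0 x = 0 := by simp [Tf]

lemma Sf_one (x : ℝ) : Sf 1 x = x⁻¹ := by simp [Sf, Qf_one]

lemma one_le_Qf (m : ℕ) (x : ℝ) (hx : ∀ k, k < m → 1 < iterLog k x) : 1 ≤ Qf m x := by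
  induction m with
  | zero => simp [Qf_zero]
  | succ m ih =>
      have h1 := ih (fun k hk => hx k (by omega))
      have h2 := hx m (by omega)
      rw [Qf_succ]; nlinarith

lemma Qf_ev_one_le (m : ℕ) : ∀ᶠ x in atTop, 1 ≤ Qf m x := by
  filter_upwards [iterLog_ev_all m] with x hx
  exact one_le_Qf m x (fun k hk => hx k (by omega))

/-- Derivative of `iterLog m` is `(Qf m)⁻¹`, eventually. -/
lemma hasDerivAt_iterLog (m : ℕ) :
    ∀ᶠ x in atTop, HasDerivAt (iterLog m) ((Qf m x)⁻¹) x := by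
  induction m with
  | zero =>
      filter_upwards with x
      rw [Qf_zero, inv_one]; exact hasDerivAt_id x
  | succ m ih =>
      filter_upwards [ih, iterLog_ev_gt m 1] with x hx hpos
      have h := (Real.hasDerivAt_log (by linarith : iterLog m x ≠ 0)).comp x hx
      have : (iterLog m x)⁻¹ * (Qf m x)⁻¹ = (Qf (m+1) x)⁻¹ := by
        rw [Qf_succ, mul_inv, mul_comm]
      rw [← this]; exact h

/-- Derivative of `Qf m` is `Qf m * Sf m`, eventually. -/
lemma hasDerivAt_Qf (m : ℕ) :
    ∀ᶠ x in atTop, HasDerivAt (Qf m) (Qf m x * Sf m x) x := by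
  induction m with
  | zero =>
      filter_upwards with x
      have : HasDerivAt (Qf 0) 0 x := by
        have : Qf 0 = fun _ : ℝ => (1:ℝ) := funext Qf_zero
        rw [this]; exact hasDerivAt_const x 1
      simpa [Qf_zero, Sf_zero] using this
  | succ m ih =>
      filter_upwards [ih, hasDerivAt_iterLog m, Qf_ev_one_le (m+1), Qf_ev_one_le m]
        with x hQ hl hq1 hq0
      have h := hQ.mul hl
      have hfun : Qf (m+1) = fun y => Qf m y * iterLog m y := funext (Qf_succ m)
      rw [hfun]
      convert h using 1
      · exact rfl
      · exact rfl
      · exact rfl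
      have hQm : Qf m x ≠ 0 := by linarith
      have hQm1 : Qf (m+1) x ≠ 0 := by linarith
      have hexp : Sf (m+1) x = Sf m x + (Qf (m+1) x)⁻¹ := by
        simp [Sf, Finset.sum_range_succ]
      have hq : Qf (m+1) x = Qf m x * iterLog m x := Qf_succ m x
      have hl : iterLog m x ≠ 0 := by
        intro h0
        rw [hq, h0, mul_zero] at hq1
        linarith
      rw [hexp, hq]
      field_simp

/-- Derivative of `Sf m` is `-(Tf m)`, eventually. -/
lemma hasDerivAt_Sf (m : ℕ) :
    ∀ᶠ x in atTop, HasDerivAt (Sf m) (-(Tf m x)) x := by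
  have hall : ∀ᶠ x in atTop, ∀ k ∈ Finset.range m,
      HasDerivAt (fun y => (Qf (k+1) y)⁻¹) (-(Sf (k+1) x * (Qf (k+1) x)⁻¹)) x := by
    apply (eventually_all_finset _).2
    intro k _
    filter_upwards [hasDerivAt_Qf (k+1), Qf_ev_one_le (k+1)] with x hQ hq
    have hne : Qf (k+1) x ≠ 0 := by linarith
    have := hQ.inv hne
    convert this using 1
    · exact rfl
    · exact rfl
    · exact rfl
    field_simp
  filter_upwards [hall] with x hx
  have h := HasDerivAt.fun_sum (fun k hk => hx k hk)
  have : Sf m = fun y => ∑ k ∈ Finset.range m, (Qf (k+1) y)⁻¹ := rfl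
  rw [this]
  convert h using 1
  · exact rfl
  · exact rfl
  simp [Tf]

/-- `∏_{k=1}^{r} iterLog k x → ∞` for `r ≥ 1`. -/
lemma tendsto_prod_Icc (r : ℕ) (hr : 1 ≤ r) :
    Tendsto (fun x => ∏ k ∈ Finset.Icc 1 r, iterLog k x) atTop atTop := by
  induction r with
  | zero => omega
  | succ r ih =>
      rcases Nat.eq_zero_or_pos r with h0 | hpos
      · subst h0
        simpa [Finset.Icc_self] using tendsto_iterLog 1
      · have hstep : (fun x => ∏ k ∈ Finset.Icc 1 (r+1), iterLog k x)
            = fun x => (∏ k ∈ Finset.Icc 1 r, iterLog k x) * iterLog (r+1) x := by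
          funext x
          exact Finset.prod_Icc_succ_top (by omega) _
        rw [hstep]
        exact (ih hpos).atTop_mul_atTop₀ (tendsto_iterLog (r+1))

/-- `x / Qf m x` tends to `1` if `m = 1`, `0` if `m ≥ 2`. -/
lemma tendsto_x_div_Qf (m : ℕ) (hm : 1 ≤ m) :
    Tendsto (fun x => x * (Qf m x)⁻¹) atTop (nhds (if m = 1 then 1 else 0)) := by
  have hQ : ∀ᶠ x in atTop, Qf m x = x * ∏ k ∈ Finset.Icc 1 (m-1), iterLog k x := by
    filter_upwards with x
    have : Finset.range m = insert 0 (Finset.Icc 1 (m-1)) := by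
      ext k
      simp [Finset.mem_range, Finset.mem_Icc, Finset.mem_insert]
      omega
    rw [Qf, this, Finset.prod_insert (by simp), iterLog_zero]
  rcases Nat.lt_or_ge m 2 with h2 | h2
  · have : m = 1 := by omega
    subst this
    simp only [if_pos rfl]
    have heq : (fun x : ℝ => x * (Qf 1 x)⁻¹) =ᶠ[atTop] fun _ => (1:ℝ) := by
      filter_upwards [eventually_gt_atTop 0] with x hx
      rw [Qf_one]; field_simp
    exact Tendsto.congr' heq.symm tendsto_const_nhds
  · have hm1 : m ≠ 1 := by omega
    simp only [if_neg hm1]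
    have hP : Tendsto (fun x => ∏ k ∈ Finset.Icc 1 (m-1), iterLog k x) atTop atTop :=
      tendsto_prod_Icc (m-1) (by omega)
    have heq : (fun x : ℝ => x * (Qf m x)⁻¹)
        =ᶠ[atTop] fun x => (∏ k ∈ Finset.Icc 1 (m-1), iterLog k x)⁻¹ := by
      filter_upwards [hQ, eventually_gt_atTop 0, hP.eventually_gt_atTop 0] with x hq hx hp
      rw [hq, mul_inv, ← mul_assoc, mul_inv_cancel₀ (ne_of_gt hx), one_mul]
    exact Tendsto.congr' heq.symm hP.inv_tendsto_atTop

/-- `x * Sf m x → 1` for `m ≥ 1` (`0` for `m = 0`). -/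
lemma tendsto_x_mul_Sf (m : ℕ) :
    Tendsto (fun x => x * Sf m x) atTop (nhds (if m = 0 then 0 else 1)) := by
  have hterm : ∀ k ∈ Finset.range m,
      Tendsto (fun x => x * (Qf (k+1) x)⁻¹) atTop (nhds (if k = 0 then 1 else 0)) := by
    intro k _
    have := tendsto_x_div_Qf (k+1) (by omega)
    rcases Nat.eq_zero_or_pos k with h0 | hpos
    · subst h0; simpa using this
    · have h1 : k + 1 ≠ 1 := by omega
      have h2 : k ≠ 0 := by omega
      simpa [h1, h2] using this
  have hsum := tendsto_finset_sum (Finset.range m) hterm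
  have heq : (fun x => x * Sf m x)
      = fun x => ∑ k ∈ Finset.range m, x * (Qf (k+1) x)⁻¹ := by
    funext x; rw [Sf, Finset.mul_sum]
  rw [heq]
  convert hsum using 2
  rcases Nat.eq_zero_or_pos m with h0 | hpos
  · subst h0; simp
  · have hm : m ≠ 0 := by omega
    rw [if_neg hm, Finset.sum_ite_eq' (Finset.range m) 0 (fun _ => (1:ℝ))]
    simp [Finset.mem_range, hpos]

/-- `x^2 * Tf m x → 1` for `m ≥ 1` (`0` for `m = 0`). -/
lemma tendsto_x2_mul_Tf (m : ℕ) :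
    Tendsto (fun x => x^2 * Tf m x) atTop (nhds (if m = 0 then 0 else 1)) := by
  have hterm : ∀ k ∈ Finset.range m,
      Tendsto (fun x => x^2 * (Sf (k+1) x * (Qf (k+1) x)⁻¹)) atTop
        (nhds (if k = 0 then 1 else 0)) := by
    intro k _
    have h1 := tendsto_x_mul_Sf (k+1)
    have h2 := tendsto_x_div_Qf (k+1) (by omega)
    have h3 := h1.mul h2
    have heq : (fun x => x * Sf (k+1) x * (x * (Qf (k+1) x)⁻¹))
        = fun x => x^2 * (Sf (k+1) x * (Qf (k+1) x)⁻¹) := by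
      funext x; ring
    rw [heq] at h3
    rcases Nat.eq_zero_or_pos k with h0 | hpos
    · subst h0; simpa using h3
    · have hk1 : k + 1 ≠ 0 := by omega
      have hk2 : k + 1 ≠ 1 := by omega
      have hk : k ≠ 0 := by omega
      simpa [hk1, hk2, hk] using h3
  have hsum := tendsto_finset_sum (Finset.range m) hterm
  have heq : (fun x => x^2 * Tf m x)
      = fun x => ∑ k ∈ Finset.range m, x^2 * (Sf (k+1) x * (Qf (k+1) x)⁻¹) := by
    funext x; rw [Tf, Finset.mul_sum]
  rw [heq]
  convert hsum using 2
  rcases Nat.eq_zero_or_pos m with h0 | hpos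
  · subst h0; simp
  · have hm : m ≠ 0 := by omega
    rw [if_neg hm, Finset.sum_ite_eq' (Finset.range m) 0 (fun _ => (1:ℝ))]
    simp [Finset.mem_range, hpos]

/-- Eventually `iterLog (k+1) x ≤ iterLog k x`. -/
lemma iterLog_ev_succ_le (k : ℕ) : ∀ᶠ x in atTop, iterLog (k+1) x ≤ iterLog k x := by
  filter_upwards [iterLog_ev_gt k 0] with x hx
  rw [iterLog_succ]
  exact Real.log_le_self (le_of_lt hx)

/-- `iterLog k x / iterLog m x → 0` when `m < k`. -/
lemma tendsto_iterLog_div (k m : ℕ) (hmk : m < k) :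
    Tendsto (fun x => iterLog k x * (iterLog m x)⁻¹) atTop (nhds 0) := by
  induction k with
  | zero => omega
  | succ k ih =>
      rcases Nat.lt_or_ge m k with hlt | hge
      · have hk := ih hlt
        apply tendsto_of_tendsto_of_tendsto_of_le_of_le'
          (tendsto_const_nhds : Tendsto (fun _ : ℝ => (0:ℝ)) atTop (nhds 0)) hk
        · filter_upwards [iterLog_ev_gt (k+1) 0, iterLog_ev_gt m 0] with x h1 h2
          positivity
        · filter_upwards [iterLog_ev_succ_le k, iterLog_ev_gt m 0] with x h1 h2
          exact mul_le_mul_of_nonneg_right h1 (by positivity)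
      · have hm : m = k := by omega
        subst hm
        have hcomp : Tendsto (fun x => Real.log (iterLog m x) / iterLog m x) atTop (nhds 0) :=
          Real.isLittleO_log_id_atTop.tendsto_div_nhds_zero.comp (tendsto_iterLog m)
        have heq : (fun x => iterLog (m+1) x * (iterLog m x)⁻¹)
            = fun x => Real.log (iterLog m x) / iterLog m x := by
          funext x; rw [iterLog_succ, div_eq_mul_inv]
        rw [heq]; exact hcomp

/-- Eventual monotonicity of `iterLog k`. -/
lemma iterLog_exists_mono (k : ℕ) :
    ∃ R : ℝ, ∀ a b : ℝ, R ≤ a → a ≤ b → iterLog k a ≤ iterLog k b := by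
  induction k with
  | zero => exact ⟨0, fun a b _ hab => hab⟩
  | succ k ih =>
      obtain ⟨R, hR⟩ := ih
      obtain ⟨M, hM⟩ := eventually_atTop.1 (iterLog_ev_gt k 0)
      refine ⟨max R M, fun a b ha hab => ?_⟩
      rw [iterLog_succ, iterLog_succ]
      apply Real.log_le_log
      · exact hM a (le_trans (le_max_right R M) ha)
      · exact hR a b (le_trans (le_max_left R M) ha) hab

/-- Slow-variation transfer: if `log (m t) / log t → 1` and `m t → ∞`, then
`iterLog k (m t) / iterLog k t → 1` for all `k ≥ 1`. -/
lemma iterLog_ratio_transfer (m : ℝ → ℝ) (hmm2 : Tendsto m atTop atTop)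
    (h1 : Tendsto (fun t => iterLog 1 (m t) * (iterLog 1 t)⁻¹) atTop (nhds 1)) :
    ∀ k, 1 ≤ k → Tendsto (fun t => iterLog k (m t) * (iterLog k t)⁻¹) atTop (nhds 1) := by
  intro k
  induction k with
  | zero => omega
  | succ k ih =>
      intro _
      rcases Nat.eq_zero_or_pos k with h0 | hpos
      · subst h0; exact h1
      · have hk := ih hpos
        have hdiff : Tendsto (fun t => iterLog (k+1) (m t) - iterLog (k+1) t) atTop (nhds 0) := by
          have hlog : Tendsto (fun t => Real.log (iterLog k (m t) * (iterLog k t)⁻¹))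
              atTop (nhds 0) := by
            simpa using hk.log one_ne_zero
          apply hlog.congr'
          filter_upwards [(tendsto_iterLog k).comp hmm2 |>.eventually_gt_atTop 0,
            iterLog_ev_gt k 0] with t hmt ht
          have hmt' : 0 < iterLog k (m t) := hmt
          rw [Real.log_mul (ne_of_gt hmt') (by positivity), Real.log_inv,
            iterLog_succ, iterLog_succ]
          ring
        have hres : Tendsto (fun t => 1 + (iterLog (k+1) (m t) - iterLog (k+1) t)
            * (iterLog (k+1) t)⁻¹) atTop (nhds 1) := by
          have h2 : Tendsto (fun t : ℝ => (iterLog (k+1) t)⁻¹) atTop (nhds 0) :=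
            (tendsto_iterLog (k+1)).inv_tendsto_atTop
          have := hdiff.mul h2
          simpa using tendsto_const_nhds.add this
        apply hres.congr'
        filter_upwards [iterLog_ev_gt (k+1) 0] with t ht
        field_simp
        ring

/-- Eventually `iterLog k x ≤ iterLog 1 x` for `1 ≤ k`. -/
lemma iterLog_ev_le_log (k : ℕ) (hk : 1 ≤ k) :
    ∀ᶠ x in atTop, iterLog k x ≤ iterLog 1 x := by
  induction k with
  | zero => omega
  | succ k ih =>
      rcases Nat.eq_zero_or_pos k with h0 | hpos
      · subst h0; filter_upwards with x; exact le_refl _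
      · filter_upwards [ih hpos, iterLog_ev_succ_le k] with x h1 h2
        exact le_trans h2 h1

/-- `x / ∏_{k=1}^r iterLog k x → ∞`. -/
lemma tendsto_x_div_prodIcc (r : ℕ) :
    Tendsto (fun x => x * (∏ k ∈ Finset.Icc 1 r, iterLog k x)⁻¹) atTop atTop := by
  have hbound : ∀ᶠ x in atTop, ∏ k ∈ Finset.Icc 1 r, iterLog k x ≤ x ^ ((1:ℝ)/2) := by
    have hle : ∀ᶠ x in atTop, ∀ k ∈ Finset.Icc 1 r, iterLog k x ≤ iterLog 1 x :=
      (eventually_all_finset _).2 fun k hk =>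
        iterLog_ev_le_log k (Finset.mem_Icc.1 hk).1
    have hlittle : ∀ᶠ x in atTop,
        ‖Real.log x ^ (r:ℝ)‖ ≤ 1 * ‖x ^ ((1:ℝ)/2)‖ :=
      (isLittleO_log_rpow_rpow_atTop (r:ℝ) (by norm_num : (0:ℝ) < 1/2)).bound one_pos
    filter_upwards [hle, hlittle, iterLog_ev_all r, iterLog_ev_gt 1 1,
      eventually_gt_atTop 1] with x h1 h2 h3 h4 h5
    have hlog : (1:ℝ) ≤ Real.log x := by
      have := h4; simp only [iterLog_succ, iterLog_zero] at this; linarith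
    have hprod : ∏ k ∈ Finset.Icc 1 r, iterLog k x ≤ Real.log x ^ r := by
      have : ∏ k ∈ Finset.Icc 1 r, iterLog k x
          ≤ ∏ _k ∈ Finset.Icc 1 r, Real.log x := by
        apply Finset.prod_le_prod
        · intro k hk
          have := h3 k (Finset.mem_Icc.1 hk).2
          linarith
        · intro k hk
          have := h1 k hk
          simpa [iterLog_succ, iterLog_zero] using this
      simpa [Finset.prod_const, Nat.card_Icc] using this
    have hr : Real.log x ^ r = Real.log x ^ (r:ℝ) := by
      rw [Real.rpow_natCast]
    have h2' : Real.log x ^ (r:ℝ) ≤ x ^ ((1:ℝ)/2) := by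
      have hx2 : (0:ℝ) ≤ x ^ ((1:ℝ)/2) := Real.rpow_nonneg (by linarith) _
      have := h2
      rw [Real.norm_eq_abs, Real.norm_eq_abs, abs_of_nonneg (by positivity),
        abs_of_nonneg hx2, one_mul] at this
      exact this
    linarith [hprod, hr ▸ h2']
  apply tendsto_atTop_mono' _ _ (tendsto_rpow_atTop (by norm_num : (0:ℝ) < 1/2))
  filter_upwards [hbound, iterLog_ev_all r, eventually_gt_atTop 1] with x h1 h2 h3
  have hP : 0 < ∏ k ∈ Finset.Icc 1 r, iterLog k x := by
    apply Finset.prod_pos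
    intro k hk
    have := h2 k (Finset.mem_Icc.1 hk).2
    linarith
  have hx : (0:ℝ) < x := by linarith
  have hhalf : (0:ℝ) < x ^ ((1:ℝ)/2) := Real.rpow_pos_of_pos hx _
  calc x ^ ((1:ℝ)/2) = x / x ^ ((1:ℝ)/2) := by
        rw [eq_div_iff (ne_of_gt hhalf), ← Real.rpow_add hx]
        norm_num
    _ ≤ x / ∏ k ∈ Finset.Icc 1 r, iterLog k x := by
        apply div_le_div_of_nonneg_left (le_of_lt hx) hP h1
    _ = x * (∏ k ∈ Finset.Icc 1 r, iterLog k x)⁻¹ := div_eq_mul_inv _ _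

lemma phi_machinery (α : ℝ) (hα : 0 < α) (L : ℝ → ℝ)
    (hLpos : ∀ᶠ x in atTop, 0 < L x)
    (hLsmooth : ∃ x₁ : ℝ, ContDiffOn ℝ 4 L (Set.Ioi x₁))
    (hA4 : CondA4 L) :
    ∃ (φ1 φ2 φ3 : ℝ → ℝ),
      (∀ᶠ y in atTop, HasDerivAt (fun z => Real.log (L (z ^ (1/α:ℝ)))) (φ1 y) y ∧
        HasDerivAt φ1 (φ2 y) y ∧ HasDerivAt φ2 (φ3 y) y) ∧
      Tendsto (fun y => Real.log (L (y ^ (1/α:ℝ)))) atTop (nhds 0) ∧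
      Tendsto (fun y => y * φ1 y) atTop (nhds 0) ∧
      Tendsto (fun y => y^2 * φ2 y) atTop (nhds 0) ∧
      Tendsto (fun y => y^3 * φ3 y) atTop (nhds 0) := by
  obtain ⟨x₁, hL4⟩ := hLsmooth
  obtain ⟨M, hM⟩ := eventually_atTop.1 hLpos
  set φ : ℝ → ℝ := fun z => Real.log (L (z ^ (1/α:ℝ))) with hφdef
  set b : ℝ := max (max x₁ M) 0 + 1 with hbdef
  have hb1 : (1:ℝ) ≤ b := by
    have : (0:ℝ) ≤ max (max x₁ M) 0 := le_max_right _ _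
    linarith
  have hb0 : (0:ℝ) < b := by linarith
  set R : ℝ := b ^ α with hRdef
  have hR1 : (1:ℝ) ≤ R := Real.one_le_rpow hb1 (le_of_lt hα)
  -- basic: z > R implies rpow value big
  have hkey : ∀ z : ℝ, R < z → b < z ^ (1/α:ℝ) ∧ x₁ < z ^ (1/α:ℝ) ∧ 0 < L (z ^ (1/α:ℝ))
      ∧ z ≠ 0 := by
    intro z hz
    have hz0 : (0:ℝ) < z := lt_of_lt_of_le (by linarith) (le_of_lt hz)
    have h1 : R ^ (1/α:ℝ) < z ^ (1/α:ℝ) :=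
      Real.rpow_lt_rpow (by positivity) hz (by positivity)
    have h2 : R ^ (1/α:ℝ) = b := by
      rw [hRdef, ← Real.rpow_mul (le_of_lt hb0), mul_one_div, div_self (ne_of_gt hα),
        Real.rpow_one]
    rw [h2] at h1
    have hx1 : x₁ < z ^ (1/α:ℝ) := by
      have : x₁ ≤ max (max x₁ M) 0 := le_trans (le_max_left _ _) (le_max_left _ _)
      calc x₁ ≤ max (max x₁ M) 0 := this
        _ < b := by rw [hbdef]; linarith
        _ < _ := h1
    have hMz : M ≤ z ^ (1/α:ℝ) := by
      have : M ≤ max (max x₁ M) 0 := le_trans (le_max_right _ _) (le_max_left _ _)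
      have hb : M < b := by rw [hbdef]; linarith
      linarith
    exact ⟨h1, hx1, hM _ hMz, ne_of_gt hz0⟩
  -- smoothness of φ on the open ray
  have hφsmooth : ∀ z : ℝ, R < z → ContDiffAt ℝ 4 φ z := by
    intro z hz
    obtain ⟨hb, hx1, hLz, hz0⟩ := hkey z hz
    have crpow : ContDiffAt ℝ 4 (fun z : ℝ => z ^ (1/α:ℝ)) z :=
      Real.contDiffAt_rpow_const_of_ne hz0
    have cL : ContDiffAt ℝ 4 L (z ^ (1/α:ℝ)) :=
      hL4.contDiffAt ((isOpen_Ioi).mem_nhds hx1)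
    have clog : ContDiffAt ℝ 4 Real.log (L (z ^ (1/α:ℝ))) :=
      Real.contDiffAt_log.2 (ne_of_gt hLz)
    exact clog.comp z (cL.comp z crpow)
  have hOpen : IsOpen (Set.Ioi R) := isOpen_Ioi
  have hφOn : ContDiffOn ℝ 4 φ (Set.Ioi R) :=
    fun z hz => (hφsmooth z hz).contDiffWithinAt
  set D1 : ℝ → ℝ := deriv φ with hD1def
  set D2 : ℝ → ℝ := deriv D1 with hD2def
  set D3 : ℝ → ℝ := deriv D2 with hD3def
  have hD1On : ContDiffOn ℝ 3 D1 (Set.Ioi R) :=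
    hφOn.deriv_of_isOpen hOpen (by norm_num)
  have hD2On : ContDiffOn ℝ 2 D2 (Set.Ioi R) :=
    hD1On.deriv_of_isOpen hOpen (by norm_num)
  have hEV : ∀ᶠ y in atTop, R < y := eventually_gt_atTop R
  have hder : ∀ᶠ y in atTop, HasDerivAt φ (D1 y) y ∧
      HasDerivAt D1 (D2 y) y ∧ HasDerivAt D2 (D3 y) y := by
    filter_upwards [hEV] with y hy
    have hmem : Set.Ioi R ∈ nhds y := hOpen.mem_nhds hy
    refine ⟨?_, ?_, ?_⟩
    · exact ((hφsmooth y hy).differentiableAt (by norm_num)).hasDerivAt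
    · exact ((hD1On.contDiffAt hmem).differentiableAt (by norm_num)).hasDerivAt
    · exact ((hD2On.contDiffAt hmem).differentiableAt (by norm_num)).hasDerivAt
  -- A4 limits
  have hA40 := hA4 0 (1/α) (by positivity)
  have hA41 := hA4 1 (1/α) (by positivity)
  have hA42 := hA4 2 (1/α) (by positivity)
  have hA43 := hA4 3 (1/α) (by positivity)
  rw [Function.iterate_zero] at hA40
  have hit1 : logDerivOp^[1] φ = fun y => y * D1 y := by
    rw [Function.iterate_one]; rfl
  rw [hit1] at hA41
  -- second iterate
  have hit2 : ∀ᶠ y in atTop, logDerivOp^[2] φ y = y * D1 y + y^2 * D2 y := by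
    filter_upwards [hder, hEV] with y hy hRy
    have : logDerivOp^[2] φ = logDerivOp (logDerivOp^[1] φ) := by
      rw [← Function.iterate_succ_apply' logDerivOp 1 φ]
    rw [this, hit1]
    show y * deriv (fun z => z * D1 z) y = _
    have hd : HasDerivAt (fun z => z * D1 z) (1 * D1 y + y * D2 y) y :=
      (hasDerivAt_id y).mul hy.2.1
    rw [hd.deriv]; ring
  have hlim2 : Tendsto (fun y => y^2 * D2 y) atTop (nhds 0) := by
    have := hA42.sub hA41
    rw [show (0:ℝ) - 0 = 0 by ring] at this
    apply this.congr'
    filter_upwards [hit2] with y hy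
    rw [hy]; ring
  -- third iterate
  have hit3 : ∀ᶠ y in atTop, logDerivOp^[3] φ y = y * D1 y + 3 * (y^2 * D2 y) + y^3 * D3 y := by
    have hmem2 : ∀ᶠ y in atTop, logDerivOp^[2] φ =ᶠ[nhds y] fun z => z * D1 z + z^2 * D2 z := by
      obtain ⟨R2, hR2⟩ := eventually_atTop.1 hit2
      filter_upwards [eventually_gt_atTop R2] with y hy
      have : Set.Ioi R2 ∈ nhds y := isOpen_Ioi.mem_nhds hy
      filter_upwards [this] with z hz
      exact hR2 z (le_of_lt hz)
    filter_upwards [hder, hmem2] with y hy hy2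
    have : logDerivOp^[3] φ = logDerivOp (logDerivOp^[2] φ) := by
      rw [← Function.iterate_succ_apply' logDerivOp 2 φ]
    rw [this]
    show y * deriv (logDerivOp^[2] φ) y = _
    rw [hy2.deriv_eq]
    have hd : HasDerivAt (fun z => z * D1 z + z^2 * D2 z)
        ((1 * D1 y + y * D2 y) + ((2 * y^1) * D2 y + y^2 * D3 y)) y := by
      exact ((hasDerivAt_id y).mul hy.2.1).add
        (((hasDerivAt_pow 2 y).mul hy.2.2).congr_deriv (by norm_num))
    rw [hd.deriv]; ring
  have hlim3 : Tendsto (fun y => y^3 * D3 y) atTop (nhds 0) := by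
    have h3 : Tendsto (fun y => (3:ℝ) * (y^2 * D2 y)) atTop (nhds 0) := by
      simpa using hlim2.const_mul (3:ℝ)
    have := (hA43.sub hA41).sub h3
    rw [show (0:ℝ) - 0 - 0 = 0 by ring] at this
    apply this.congr'
    filter_upwards [hit3] with y hy
    rw [hy]; ring
  exact ⟨D1, D2, D3, hder, hA40, hA41, hlim2, hlim3⟩

lemma eventually_nhds_of_eventually_atTop {P : ℝ → Prop} (h : ∀ᶠ x in atTop, P x) :
    ∀ᶠ x in atTop, ∀ᶠ z in nhds x, P z := by
  obtain ⟨R, hR⟩ := eventually_atTop.1 h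
  filter_upwards [eventually_gt_atTop R] with x hx
  filter_upwards [isOpen_Ioi.mem_nhds hx] with z hz
  exact hR z (le_of_lt hz)

set_option maxHeartbeats 1600000 in
lemma g_machinery (n : ℕ) (α : ℝ) (L : ℝ → ℝ) (β : ℝ)
    (hn : 1 ≤ n) (hα : 0 < α)
    (hLpos : ∀ᶠ x in atTop, 0 < L x)
    (hLsmooth : ∃ x₁ : ℝ, ContDiffOn ℝ 4 L (Set.Ioi x₁))
    (hA4 : CondA4 L) (hβ1 : β < 1) :
    ∃ g1 g2 g3 : ℝ → ℝ,
      (∀ᶠ x in atTop,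
        HasDerivAt (fun y => Real.log ((1 - β) * un n α L y)) (g1 x) x ∧
        HasDerivAt g1 (g2 x) x ∧ HasDerivAt g2 (g3 x) x) ∧
      Tendsto (fun x => Real.log ((1 - β) * un n α L x) * α * (iterLog n x)⁻¹)
        atTop (nhds 1) ∧
      Tendsto (fun x => g1 x * (α * Qf n x)) atTop (nhds 1) ∧
      Tendsto (fun x => g2 x * (α * (x * Qf n x))) atTop (nhds (-1)) ∧
      Tendsto (fun x => g3 x * (α * (x^2 * Qf n x))) atTop (nhds 2) := by
  obtain ⟨φ1, φ2, φ3, hφder, hφ0, hφ1, hφ2, hφ3⟩ := phi_machinery α hα L hLpos hLsmooth hA4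
  set φ : ℝ → ℝ := fun z => Real.log (L (z ^ (1/α:ℝ))) with hφdef
  set w : ℝ → ℝ := iterLog (n-1) with hwdef
  set dd : ℝ := if n = 1 then 1 else 0 with hdddef
  set g : ℝ → ℝ := fun x => Real.log ((1 - β) * un n α L x) with hgdef
  have hsub : n - 1 + 1 = n := Nat.succ_pred_eq_of_pos hn
  have hβ : (0:ℝ) < 1 - β := by linarith
  have htw : Tendsto w atTop atTop := tendsto_iterLog (n-1)
  have hQfact : ∀ x : ℝ, Qf n x = Qf (n-1) x * w x := by
    intro x
    have := Qf_succ (n-1) x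
    rwa [hsub] at this
  have hlogw : ∀ x : ℝ, iterLog n x = Real.log (w x) := by
    intro x
    have := iterLog_succ (n-1) x
    rw [hsub] at this
    exact this
  have hlogn1 : ∀ x : ℝ, iterLog (n+1) x = Real.log (iterLog n x) := fun x => rfl
  -- the eventual formula for g
  have hgfun : ∀ᶠ x in atTop, g x = Real.log (1-β) + (1/α) * iterLog n x
      + (dd/α) * (iterLog (n+1) x - Real.log α) - (1/α) * φ (w x) := by
    filter_upwards [htw.eventually_gt_atTop 1,
      (tendsto_iterLog n).eventually_gt_atTop 1,
      ((tendsto_rpow_atTop (by positivity : (0:ℝ) < 1/α)).comp htw).eventually hLpos]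
      with x hw1 hn1 hLx
    have hw0 : (0:ℝ) < w x := by linarith
    have hlw : (0:ℝ) < Real.log (w x) := by rw [← hlogw]; linarith
    have hA : (0:ℝ) < (w x) ^ (1/α:ℝ) := Real.rpow_pos_of_pos hw0 _
    have hL0 : (0:ℝ) < L ((w x) ^ (1/α:ℝ)) := hLx
    have hBbase : (0:ℝ) < Real.log (w x) / α := by positivity
    have hB : (0:ℝ) < (Real.log (w x) / α) ^ (dd/α:ℝ) := Real.rpow_pos_of_pos hBbase _
    have hC : (0:ℝ) < (L ((w x) ^ (1/α:ℝ))) ^ (-(1/α):ℝ) := Real.rpow_pos_of_pos hL0 _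
    have hun : un n α L x = (w x) ^ (1/α:ℝ)
        * ((Real.log (w x) / α) ^ (dd/α:ℝ) * (L ((w x) ^ (1/α:ℝ))) ^ (-(1/α):ℝ)) := by
      rw [un, omegaW, hwdef, hdddef]
    rw [hgdef]
    simp only
    rw [hun, Real.log_mul (ne_of_gt hβ) (by positivity),
      Real.log_mul (ne_of_gt hA) (by positivity),
      Real.log_mul (ne_of_gt hB) (ne_of_gt hC),
      Real.log_rpow hw0, Real.log_rpow hBbase, Real.log_rpow hL0,
      Real.log_div (ne_of_gt hlw) (ne_of_gt hα)]
    rw [hφdef]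
    simp only
    rw [← hlogw x, hlogn1 x, hlogw x]
    ring
  -- derivative tools composed along w
  have hφderW : ∀ᶠ x in atTop, HasDerivAt φ (φ1 (w x)) (w x) ∧
      HasDerivAt φ1 (φ2 (w x)) (w x) ∧ HasDerivAt φ2 (φ3 (w x)) (w x) := htw.eventually hφder
  -- define g1, g2, g3
  set g1 : ℝ → ℝ := fun y => (1/α) * (Qf n y)⁻¹ + (dd/α) * (Qf (n+1) y)⁻¹
      - (1/α) * (φ1 (w y) * (Qf (n-1) y)⁻¹) with hg1def
  set g2 : ℝ → ℝ := fun y => -((1/α) * (Sf n y * (Qf n y)⁻¹))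
      - (dd/α) * (Sf (n+1) y * (Qf (n+1) y)⁻¹)
      - (1/α) * (φ2 (w y) * ((Qf (n-1) y)⁻¹)^2)
      + (1/α) * (φ1 (w y) * (Sf (n-1) y * (Qf (n-1) y)⁻¹)) with hg2def
  set g3 : ℝ → ℝ := fun y => (1/α) * ((Tf n y + (Sf n y)^2) * (Qf n y)⁻¹)
      + (dd/α) * ((Tf (n+1) y + (Sf (n+1) y)^2) * (Qf (n+1) y)⁻¹)
      - (1/α) * (φ3 (w y) * ((Qf (n-1) y)⁻¹)^3)
      + (3/α) * (φ2 (w y) * (Sf (n-1) y * ((Qf (n-1) y)⁻¹)^2))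
      - (1/α) * (φ1 (w y) * ((Tf (n-1) y + (Sf (n-1) y)^2) * (Qf (n-1) y)⁻¹)) with hg3def
  -- HasDerivAt g g1
  have hgder : ∀ᶠ x in atTop, HasDerivAt g (g1 x) x := by
    filter_upwards [eventually_nhds_of_eventually_atTop hgfun,
      hasDerivAt_iterLog n, hasDerivAt_iterLog (n+1), hasDerivAt_iterLog (n-1),
      hφderW] with x hnhds hdn hdn1 hdw hφx
    have h1 : HasDerivAt (fun y => (1/α) * iterLog n y) ((1/α) * (Qf n x)⁻¹) x :=
      hdn.const_mul (1/α)
    have h2 : HasDerivAt (fun y => (dd/α) * (iterLog (n+1) y - Real.log α))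
        ((dd/α) * (Qf (n+1) x)⁻¹) x := by
      simpa using (hdn1.sub_const (Real.log α)).const_mul (dd/α)
    have h3 : HasDerivAt (fun y => (1/α) * φ (w y))
        ((1/α) * (φ1 (w x) * (Qf (n-1) x)⁻¹)) x :=
      (HasDerivAt.comp x hφx.1 hdw).const_mul (1/α)
    have hF : HasDerivAt (fun y => Real.log (1-β) + (1/α) * iterLog n y
        + (dd/α) * (iterLog (n+1) y - Real.log α) - (1/α) * φ (w y)) (g1 x) x := by
      have := ((h1.add h2).sub h3).const_add (Real.log (1-β))
      convert this using 1
      · exact rfl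
      · exact rfl
      funext y; simp only [Pi.add_apply, Pi.sub_apply]; ring
    exact hF.congr_of_eventuallyEq hnhds
  -- HasDerivAt g1 g2
  have hg1der : ∀ᶠ x in atTop, HasDerivAt g1 (g2 x) x := by
    filter_upwards [hasDerivAt_Qf n, hasDerivAt_Qf (n+1), hasDerivAt_Qf (n-1),
      hasDerivAt_iterLog (n-1), hφderW, Qf_ev_one_le n, Qf_ev_one_le (n+1),
      Qf_ev_one_le (n-1)] with x hQn hQn1 hQw hdw hφx hb1 hb2 hb3
    have hQnne : Qf n x ≠ 0 := by linarith
    have hQn1ne : Qf (n+1) x ≠ 0 := by linarith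
    have hQwne : Qf (n-1) x ≠ 0 := by linarith
    have d1 : HasDerivAt (fun y => (1/α) * (Qf n y)⁻¹)
        ((1/α) * (-(Qf n x * Sf n x) / Qf n x ^ 2)) x := (hQn.inv hQnne).const_mul _
    have d2 : HasDerivAt (fun y => (dd/α) * (Qf (n+1) y)⁻¹)
        ((dd/α) * (-(Qf (n+1) x * Sf (n+1) x) / Qf (n+1) x ^ 2)) x :=
      (hQn1.inv hQn1ne).const_mul _
    have d3 : HasDerivAt (fun y => (1/α) * (φ1 (w y) * (Qf (n-1) y)⁻¹))
        ((1/α) * ((φ2 (w x) * (Qf (n-1) x)⁻¹) * (Qf (n-1) x)⁻¹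
          + φ1 (w x) * (-(Qf (n-1) x * Sf (n-1) x) / Qf (n-1) x ^ 2))) x :=
      ((HasDerivAt.comp x hφx.2.1 hdw).mul (hQw.inv hQwne)).const_mul _
    have hF := (d1.add d2).sub d3
    have hfun : g1 = fun y => (1/α) * (Qf n y)⁻¹ + (dd/α) * (Qf (n+1) y)⁻¹
        - (1/α) * (φ1 (w y) * (Qf (n-1) y)⁻¹) := rfl
    rw [hfun]
    convert hF using 1
    · exact rfl
    · exact rfl
    · exact rfl
    rw [hg2def]
    field_simp
    ring
  -- HasDerivAt g2 g3
  have hg2der : ∀ᶠ x in atTop, HasDerivAt g2 (g3 x) x := by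
    filter_upwards [hasDerivAt_Qf n, hasDerivAt_Qf (n+1), hasDerivAt_Qf (n-1),
      hasDerivAt_Sf n, hasDerivAt_Sf (n+1), hasDerivAt_Sf (n-1),
      hasDerivAt_iterLog (n-1), hφderW, Qf_ev_one_le n, Qf_ev_one_le (n+1),
      Qf_ev_one_le (n-1)] with x hQn hQn1 hQw hSn hSn1 hSw hdw hφx hb1 hb2 hb3
    have hQnne : Qf n x ≠ 0 := by linarith
    have hQn1ne : Qf (n+1) x ≠ 0 := by linarith
    have hQwne : Qf (n-1) x ≠ 0 := by linarith
    have d1 : HasDerivAt (fun y => -((1/α) * (Sf n y * (Qf n y)⁻¹)))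
        (-((1/α) * ((-(Tf n x)) * (Qf n x)⁻¹
          + Sf n x * (-(Qf n x * Sf n x) / Qf n x ^ 2)))) x :=
      ((hSn.mul (hQn.inv hQnne)).const_mul (1/α)).neg
    have d2 : HasDerivAt (fun y => (dd/α) * (Sf (n+1) y * (Qf (n+1) y)⁻¹))
        ((dd/α) * ((-(Tf (n+1) x)) * (Qf (n+1) x)⁻¹
          + Sf (n+1) x * (-(Qf (n+1) x * Sf (n+1) x) / Qf (n+1) x ^ 2))) x :=
      (hSn1.mul (hQn1.inv hQn1ne)).const_mul _
    have d3 : HasDerivAt (fun y => (1/α) * (φ2 (w y) * ((Qf (n-1) y)⁻¹)^2))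
        ((1/α) * ((φ3 (w x) * (Qf (n-1) x)⁻¹) * ((Qf (n-1) x)⁻¹)^2
          + φ2 (w x) * (2 * ((Qf (n-1) x)⁻¹)^1 * (-(Qf (n-1) x * Sf (n-1) x) / Qf (n-1) x ^ 2)))) x := by
      have hpow : HasDerivAt (fun y => ((Qf (n-1) y)⁻¹)^2)
          (2 * ((Qf (n-1) x)⁻¹)^1 * (-(Qf (n-1) x * Sf (n-1) x) / Qf (n-1) x ^ 2)) x := by
        simpa using (hQw.inv hQwne).fun_pow 2
      exact ((HasDerivAt.comp x hφx.2.2 hdw).mul hpow).const_mul _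
    have d4 : HasDerivAt (fun y => (1/α) * (φ1 (w y) * (Sf (n-1) y * (Qf (n-1) y)⁻¹)))
        ((1/α) * ((φ2 (w x) * (Qf (n-1) x)⁻¹) * (Sf (n-1) x * (Qf (n-1) x)⁻¹)
          + φ1 (w x) * ((-(Tf (n-1) x)) * (Qf (n-1) x)⁻¹
            + Sf (n-1) x * (-(Qf (n-1) x * Sf (n-1) x) / Qf (n-1) x ^ 2)))) x :=
      ((HasDerivAt.comp x hφx.2.1 hdw).mul (hSw.mul (hQw.inv hQwne))).const_mul _
    have hF := ((d1.sub d2).sub d3).add d4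
    have hfun : g2 = fun y => -((1/α) * (Sf n y * (Qf n y)⁻¹))
        - (dd/α) * (Sf (n+1) y * (Qf (n+1) y)⁻¹)
        - (1/α) * (φ2 (w y) * ((Qf (n-1) y)⁻¹)^2)
        + (1/α) * (φ1 (w y) * (Sf (n-1) y * (Qf (n-1) y)⁻¹)) := rfl
    rw [hfun]
    convert hF using 1
    · exact rfl
    · exact rfl
    · exact rfl
    rw [hg3def]
    field_simp
    ring
  -- limit ingredients
  have hinvn : Tendsto (fun x => (iterLog n x)⁻¹) atTop (nhds 0) :=
    (tendsto_iterLog n).inv_tendsto_atTop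
  have hdivn : Tendsto (fun x => iterLog (n+1) x * (iterLog n x)⁻¹) atTop (nhds 0) :=
    tendsto_iterLog_div (n+1) n (by omega)
  have hφ0w : Tendsto (fun x => φ (w x)) atTop (nhds 0) := hφ0.comp htw
  have hφ1w : Tendsto (fun x => w x * φ1 (w x)) atTop (nhds 0) := hφ1.comp htw
  have hφ2w : Tendsto (fun x => w x ^ 2 * φ2 (w x)) atTop (nhds 0) := hφ2.comp htw
  have hφ3w : Tendsto (fun x => w x ^ 3 * φ3 (w x)) atTop (nhds 0) := hφ3.comp htw
  set ln : ℝ := if n = 1 then 1 else 0 with hlndef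
  set vv : ℝ := if n - 1 = 0 then 0 else 1 with hvvdef
  have hxQ : Tendsto (fun x => x * (Qf n x)⁻¹) atTop (nhds ln) := tendsto_x_div_Qf n hn
  have hxSn : Tendsto (fun x => x * Sf n x) atTop (nhds 1) := by
    have := tendsto_x_mul_Sf n
    rwa [if_neg (by omega : ¬ n = 0)] at this
  have hxSn1 : Tendsto (fun x => x * Sf (n+1) x) atTop (nhds 1) := by
    have := tendsto_x_mul_Sf (n+1)
    rwa [if_neg (by omega : ¬ n + 1 = 0)] at this
  have hxSw : Tendsto (fun x => x * Sf (n-1) x) atTop (nhds vv) := by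
    have t := tendsto_x_mul_Sf (n-1)
    rcases Nat.eq_zero_or_pos (n-1) with h0 | hpos
    · have hv : vv = 0 := by rw [hvvdef, if_pos h0]
      rw [hv]; rwa [if_pos h0] at t
    · have hv : vv = 1 := by rw [hvvdef, if_neg (by omega)]
      rw [hv]; rwa [if_neg (by omega)] at t
  have hxTn : Tendsto (fun x => x^2 * Tf n x) atTop (nhds 1) := by
    have := tendsto_x2_mul_Tf n
    rwa [if_neg (by omega : ¬ n = 0)] at this
  have hxTn1 : Tendsto (fun x => x^2 * Tf (n+1) x) atTop (nhds 1) := by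
    have := tendsto_x2_mul_Tf (n+1)
    rwa [if_neg (by omega : ¬ n + 1 = 0)] at this
  have hxTw : Tendsto (fun x => x^2 * Tf (n-1) x) atTop (nhds vv) := by
    have t := tendsto_x2_mul_Tf (n-1)
    rcases Nat.eq_zero_or_pos (n-1) with h0 | hpos
    · have hv : vv = 0 := by rw [hvvdef, if_pos h0]
      rw [hv]; rwa [if_pos h0] at t
    · have hv : vv = 1 := by rw [hvvdef, if_neg (by omega)]
      rw [hv]; rwa [if_neg (by omega)] at t
  -- eventual positivity bundle
  have hposev : ∀ᶠ x in atTop, 1 ≤ Qf n x ∧ 1 ≤ Qf (n+1) x ∧ 1 ≤ Qf (n-1) x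
      ∧ 1 < iterLog n x ∧ 1 < w x ∧ 0 < x := by
    filter_upwards [Qf_ev_one_le n, Qf_ev_one_le (n+1), Qf_ev_one_le (n-1),
      (tendsto_iterLog n).eventually_gt_atTop 1, htw.eventually_gt_atTop 1,
      eventually_gt_atTop 0] with x a b c d e f
    exact ⟨a, b, c, d, e, f⟩
  -- Limit N1
  have N1 : Tendsto (fun x => g x * α * (iterLog n x)⁻¹) atTop (nhds 1) := by
    have hbuild : Tendsto (fun x => 1 + (α * Real.log (1-β) - dd * Real.log α) * (iterLog n x)⁻¹
        + dd * (iterLog (n+1) x * (iterLog n x)⁻¹) - φ (w x) * (iterLog n x)⁻¹)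
        atTop (nhds (1 + (α * Real.log (1-β) - dd * Real.log α) * 0 + dd * 0 - 0 * 0)) := by
      exact ((tendsto_const_nhds.add (hinvn.const_mul _)).add
        (hdivn.const_mul dd)).sub (hφ0w.mul hinvn)
    have hval : (1 + (α * Real.log (1-β) - dd * Real.log α) * 0 + dd * 0 - 0 * 0 : ℝ) = 1 := by
      ring
    rw [hval] at hbuild
    apply hbuild.congr'
    filter_upwards [hgfun, hposev] with x hx hp
    rw [hx]
    have hln : iterLog n x ≠ 0 := by linarith [hp.2.2.2.1]
    field_simp
    ring
  -- Limit N2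
  have N2 : Tendsto (fun x => g1 x * (α * Qf n x)) atTop (nhds 1) := by
    have hbuild : Tendsto (fun x => 1 + dd * (iterLog n x)⁻¹ - w x * φ1 (w x))
        atTop (nhds (1 + dd * 0 - 0)) :=
      (tendsto_const_nhds.add (hinvn.const_mul dd)).sub hφ1w
    have hval : (1 + dd * 0 - 0 : ℝ) = 1 := by ring
    rw [hval] at hbuild
    apply hbuild.congr'
    filter_upwards [hposev] with x hp
    obtain ⟨q1, q2, q3, l1, l2, l3⟩ := hp
    have h1 : Qf n x ≠ 0 := by linarith
    have h2 : Qf (n-1) x ≠ 0 := by linarith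
    have h3 : iterLog n x ≠ 0 := by linarith
    have h4 : w x ≠ 0 := by linarith
    rw [hg1def]
    simp only
    rw [Qf_succ n x, hQfact x]
    field_simp
  -- Limit N3
  have N3 : Tendsto (fun x => g2 x * (α * (x * Qf n x))) atTop (nhds (-1)) := by
    have hbuild : Tendsto (fun x => -(x * Sf n x)
        - dd * ((x * Sf (n+1) x) * (iterLog n x)⁻¹)
        - (w x ^ 2 * φ2 (w x)) * (x * (Qf n x)⁻¹)
        + (w x * φ1 (w x)) * (x * Sf (n-1) x))
        atTop (nhds (-1 - dd * (1 * 0) - 0 * ln + 0 * vv)) := by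
      exact ((hxSn.neg.sub ((hxSn1.mul hinvn).const_mul dd)).sub
        (hφ2w.mul hxQ)).add (hφ1w.mul hxSw)
    have hval : (-1 - dd * (1 * 0) - 0 * ln + 0 * vv : ℝ) = -1 := by ring
    rw [hval] at hbuild
    apply hbuild.congr'
    filter_upwards [hposev] with x hp
    obtain ⟨q1, q2, q3, l1, l2, l3⟩ := hp
    have h1 : Qf n x ≠ 0 := by linarith
    have h2 : Qf (n-1) x ≠ 0 := by linarith
    have h3 : iterLog n x ≠ 0 := by linarith
    have h4 : w x ≠ 0 := by linarith
    rw [hg2def]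
    simp only
    rw [Qf_succ n x, hQfact x]
    field_simp
  -- Limit N4
  have N4 : Tendsto (fun x => g3 x * (α * (x^2 * Qf n x))) atTop (nhds 2) := by
    have hbuild : Tendsto (fun x => (x^2 * Tf n x + (x * Sf n x)^2)
        + dd * ((x^2 * Tf (n+1) x + (x * Sf (n+1) x)^2) * (iterLog n x)⁻¹)
        - (w x ^ 3 * φ3 (w x)) * (x * (Qf n x)⁻¹)^2
        + 3 * ((w x ^ 2 * φ2 (w x)) * ((x * Sf (n-1) x) * (x * (Qf n x)⁻¹)))
        - (w x * φ1 (w x)) * (x^2 * Tf (n-1) x + (x * Sf (n-1) x)^2))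
        atTop (nhds ((1 + 1^2) + dd * ((1 + 1^2) * 0) - 0 * ln^2
          + 3 * (0 * (vv * ln)) - 0 * (vv + vv^2))) := by
      refine ((((hxTn.add (hxSn.pow 2)).add
        (((hxTn1.add (hxSn1.pow 2)).mul hinvn).const_mul dd)).sub
        (hφ3w.mul (hxQ.pow 2))).add
        (((hφ2w.mul (hxSw.mul hxQ))).const_mul 3)).sub
        (hφ1w.mul (hxTw.add (hxSw.pow 2)))
    have hval : ((1 + 1^2) + dd * ((1 + 1^2) * 0) - 0 * ln^2
        + 3 * (0 * (vv * ln)) - 0 * (vv + vv^2) : ℝ) = 2 := by ring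
    rw [hval] at hbuild
    apply hbuild.congr'
    filter_upwards [hposev] with x hp
    obtain ⟨q1, q2, q3, l1, l2, l3⟩ := hp
    have h1 : Qf n x ≠ 0 := by linarith
    have h2 : Qf (n-1) x ≠ 0 := by linarith
    have h3 : iterLog n x ≠ 0 := by linarith
    have h4 : w x ≠ 0 := by linarith
    have h5 : x ≠ 0 := by linarith
    rw [hg3def]
    simp only
    rw [Qf_succ n x, hQfact x]
    field_simp
  exact ⟨g1, g2, g3, by
    filter_upwards [hgder, hg1der, hg2der] with x a b c
    exact ⟨a, b, c⟩, N1, N2, N3, N4⟩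

def PPf (m : ℕ) (x : ℝ) : ℝ := ∏ k ∈ Finset.Icc 1 m, iterLog k x

lemma PPf_zero (x : ℝ) : PPf 0 x = 1 := by simp [PPf]

lemma PPf_succ (m : ℕ) (x : ℝ) : PPf (m+1) x = PPf m x * iterLog (m+1) x :=
  Finset.prod_Icc_succ_top (by omega) _

lemma one_le_PPf (m : ℕ) (x : ℝ) (hx : ∀ k, k ≤ m → 1 < iterLog k x) : 1 ≤ PPf m x := by
  induction m with
  | zero => simp [PPf_zero]
  | succ m ih =>
      have h1 := ih (fun k hk => hx k (by omega))
      have h2 := hx (m+1) (by omega)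
      rw [PPf_succ]; nlinarith

lemma PPf_ev_one_le (m : ℕ) : ∀ᶠ x in atTop, 1 ≤ PPf m x := by
  filter_upwards [iterLog_ev_all m] with x hx
  exact one_le_PPf m x hx

lemma Qf_eq_PPf (m : ℕ) (x : ℝ) : Qf (m+1) x = x * PPf m x := by
  have : Finset.range (m+1) = insert 0 (Finset.Icc 1 m) := by
    ext k
    simp [Finset.mem_range, Finset.mem_Icc, Finset.mem_insert]
    omega
  rw [Qf, this, Finset.prod_insert (by simp), iterLog_zero]
  rfl

lemma tendsto_PPf_atTop (m : ℕ) (hm : 1 ≤ m) : Tendsto (PPf m) atTop atTop :=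
  tendsto_prod_Icc m hm

lemma tendsto_x_div_PPf (m : ℕ) : Tendsto (fun x => x * (PPf m x)⁻¹) atTop atTop :=
  tendsto_x_div_prodIcc m

set_option maxHeartbeats 4000000 in
/-- **Lemma (asymptotics of the maximiser of `h`).**
With `h(x,t) = (t-x) log((1-β) u_n(x))`, `x_c(t)` the maximiser of `h(·,t)`,
`κ_t = -∂²h/∂x²(x_c)` and `d_t = (1/3!) ∂³h/∂x³(x_c)`, one has, as `t → ∞`,
`x_c ~ t ∏_{k=1}^n (log^{(k)} t)⁻¹`,
`κ_t ~ (log^{(n)} t)/(α t) ∏_{k=1}^n log^{(k)} t` (equivalently `κ_t ~ log^{(n)} t/(α x_c)`),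
and `d_t ~ (log^{(n)} t)/(3 α t²) ∏_{k=1}^n (log^{(k)} t)²`. -/
theorem stmt_14 (n : ℕ) (hn : 1 ≤ n) (α : ℝ) (hα : 0 < α)
    (L : ℝ → ℝ) (hLpos : ∀ᶠ x in atTop, 0 < L x)
    (hLsmooth : ∃ x₁ : ℝ, ContDiffOn ℝ 4 L (Set.Ioi x₁))
    (hA1 : CondA1 L) (hA2 : CondA2 L) (hA4 : CondA4 L)
    (β : ℝ) (hβ0 : 0 < β) (hβ1 : β < 1)
    (h : ℝ → ℝ → ℝ)
    (hDef : ∀ x t : ℝ, h x t = (t - x) * Real.log ((1 - β) * un n α L x))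
    (x₀ t₀ : ℝ) (ht₀ : x₀ - 1 ≤ t₀)
    (hconv : ∀ t : ℝ, t₀ ≤ t → ∀ x : ℝ, x₀ - 1 ≤ x → x ≤ t →
      iteratedDeriv 2 (fun y => h y t) x < 0 ∧
      0 < iteratedDeriv 3 (fun y => h y t) x ∧
      iteratedDeriv 4 (fun y => h y t) x < 0)
    (xc : ℝ → ℝ)
    (hxc : ∀ t : ℝ, t₀ ≤ t → xc t ∈ Set.Icc (x₀ - 1) t ∧
      ∀ x ∈ Set.Icc (x₀ - 1) t, h x t ≤ h (xc t) t)
    (hxc' : ∀ t : ℝ, t₀ < t → x₀ < xc t)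
    (κ d : ℝ → ℝ)
    (hκ : ∀ t, κ t = -(iteratedDeriv 2 (fun y => h y t) (xc t)))
    (hd : ∀ t, d t = (1 / 6) * iteratedDeriv 3 (fun y => h y t) (xc t)) :
    Tendsto (fun t => xc t / (t * ∏ k ∈ Finset.Icc 1 n, (iterLog k t)⁻¹)) atTop (nhds 1) ∧
    Tendsto (fun t => κ t /
      (iterLog n t / (α * t) * ∏ k ∈ Finset.Icc 1 n, iterLog k t)) atTop (nhds 1) ∧
    Tendsto (fun t => κ t / (iterLog n t / (α * xc t))) atTop (nhds 1) ∧
    Tendsto (fun t => d t /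
      (iterLog n t / (3 * α * t ^ 2) * ∏ k ∈ Finset.Icc 1 n, (iterLog k t) ^ 2))
      atTop (nhds 1) := by
  obtain ⟨g1, g2, g3, hgders, N1, N2, N3, N4⟩ :=
    g_machinery n α L β hn hα hLpos hLsmooth hA4 hβ1
  set g : ℝ → ℝ := fun x => Real.log ((1 - β) * un n α L x) with hgdef
  have hsub : n - 1 + 1 = n := Nat.succ_pred_eq_of_pos hn
  have hfun : ∀ t : ℝ, (fun y => h y t) = fun y => (t - y) * g y := by
    intro t; funext y; rw [hDef y t]
  -- bundle of eventual good properties of a point x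
  have hEbundle : ∀ᶠ x in atTop,
      (HasDerivAt g (g1 x) x ∧ HasDerivAt g1 (g2 x) x ∧ HasDerivAt g2 (g3 x) x)
      ∧ 1 ≤ Qf n x ∧ (∀ k, k ≤ n+1 → 1 < iterLog k x)
      ∧ 1 ≤ PPf (n-1) x ∧ 1 ≤ PPf n x ∧ 0 < x := by
    filter_upwards [hgders, Qf_ev_one_le n, iterLog_ev_all (n+1), PPf_ev_one_le (n-1),
      PPf_ev_one_le n, eventually_gt_atTop 0] with x a b c d e f
    exact ⟨a, b, c, d, e, f⟩
  obtain ⟨R0, hR0⟩ := eventually_atTop.1 hEbundle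
  -- first derivative formula
  have hu : ∀ t x : ℝ, R0 ≤ x → HasDerivAt (fun y => h y t) ((t - x) * g1 x - g x) x := by
    intro t x hx
    rw [hfun t]
    have hgd := (hR0 x hx).1.1
    have hid : HasDerivAt (fun y : ℝ => t - y) (-1) x := by
      simpa using (hasDerivAt_id x).const_sub t
    have := hid.mul hgd
    convert this using 1
    · exact rfl
    · exact rfl
    · exact rfl
    ring
  have huderiv : ∀ t x : ℝ, R0 ≤ x → deriv (fun y => h y t) x = (t - x) * g1 x - g x :=
    fun t x hx => (hu t x hx).deriv
  -- second and third iterated derivative formulas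
  have hD2 : ∀ t x : ℝ, R0 < x →
      iteratedDeriv 2 (fun y => h y t) x = (t - x) * g2 x - 2 * g1 x := by
    intro t x hx
    have hiter : iteratedDeriv 2 (fun y => h y t) x = deriv (deriv (fun y => h y t)) x := by
      rw [show (2:ℕ) = 1 + 1 from rfl, iteratedDeriv_succ, iteratedDeriv_one]
    rw [hiter]
    have hEq : deriv (fun y => h y t) =ᶠ[nhds x] fun y => (t - y) * g1 y - g y := by
      filter_upwards [isOpen_Ioi.mem_nhds hx] with z hz
      exact huderiv t z (le_of_lt hz)
    rw [hEq.deriv_eq]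
    have hd2 : HasDerivAt (fun y => (t - y) * g1 y - g y)
        (((-1) * g1 x + (t - x) * g2 x) - g1 x) x := by
      have hid : HasDerivAt (fun y : ℝ => t - y) (-1) x := by
        simpa using (hasDerivAt_id x).const_sub t
      exact (hid.mul (hR0 x (le_of_lt hx)).1.2.1).sub (hR0 x (le_of_lt hx)).1.1
    rw [hd2.deriv]; ring
  have hD3 : ∀ t x : ℝ, R0 < x →
      iteratedDeriv 3 (fun y => h y t) x = (t - x) * g3 x - 3 * g2 x := by
    intro t x hx
    have hiter : iteratedDeriv 3 (fun y => h y t) x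
        = deriv (iteratedDeriv 2 (fun y => h y t)) x := by
      rw [show (3:ℕ) = 2 + 1 from rfl, iteratedDeriv_succ]
    rw [hiter]
    have hEq : iteratedDeriv 2 (fun y => h y t) =ᶠ[nhds x]
        fun y => (t - y) * g2 y - 2 * g1 y := by
      filter_upwards [isOpen_Ioi.mem_nhds hx] with z hz
      exact hD2 t z hz
    rw [hEq.deriv_eq]
    have hd3 : HasDerivAt (fun y => (t - y) * g2 y - 2 * g1 y)
        (((-1) * g2 x + (t - x) * g3 x) - 2 * g2 x) x := by
      have hid : HasDerivAt (fun y : ℝ => t - y) (-1) x := by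
        simpa using (hasDerivAt_id x).const_sub t
      exact (hid.mul (hR0 x (le_of_lt hx)).1.2.2).sub
        (((hR0 x (le_of_lt hx)).1.2.1).const_mul 2)
    rw [hd3.deriv]; ring
  -- the sandwich tool from concavity
  have key : ∀ t : ℝ, t₀ ≤ t → ∀ y : ℝ, x₀ - 1 ≤ y → y ≤ t →
      (0 < deriv (fun x => h x t) y → y ≤ xc t) ∧
      (deriv (fun x => h x t) y < 0 → xc t ≤ y) := by
    intro t ht y hy1 hy2
    set f : ℝ → ℝ := fun x => h x t with hfdef
    set u : ℝ → ℝ := deriv f with hudef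
    have hiter2 : ∀ z : ℝ, iteratedDeriv 2 f z = deriv u z := by
      intro z
      rw [show (2:ℕ) = 1 + 1 from rfl, iteratedDeriv_succ, iteratedDeriv_one]
    have hu_facts : ∀ z ∈ Set.Icc (x₀ - 1) t, DifferentiableAt ℝ u z ∧ deriv u z < 0 := by
      intro z hz
      have h2 := (hconv t ht z hz.1 hz.2).1
      rw [hiter2 z] at h2
      refine ⟨?_, h2⟩
      by_contra hnd
      rw [deriv_zero_of_not_differentiableAt hnd] at h2
      exact lt_irrefl 0 h2
    have hu_cont : ContinuousOn u (Set.Icc (x₀ - 1) t) :=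
      fun z hz => ((hu_facts z hz).1.continuousAt).continuousWithinAt
    have hu_anti : StrictAntiOn u (Set.Icc (x₀ - 1) t) := by
      apply strictAntiOn_of_deriv_neg (convex_Icc _ _) hu_cont
      intro z hz
      rw [interior_Icc] at hz
      exact (hu_facts z ⟨le_of_lt hz.1, le_of_lt hz.2⟩).2
    have hxcmem := (hxc t ht).1
    have hxcmax := (hxc t ht).2
    constructor
    · intro hupos
      by_contra hcon
      push_neg at hcon
      -- xc t < y ; f is strictly monotone on [xc t, y]
      have hmono : StrictMonoOn f (Set.Icc (xc t) y) := by
        have hsub2 : Set.Icc (xc t) y ⊆ Set.Icc (x₀ - 1) t := by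
          intro z hz; exact ⟨le_trans hxcmem.1 hz.1, le_trans hz.2 hy2⟩
        have hupos' : ∀ z ∈ Set.Icc (xc t) y, 0 < u z := by
          intro z hz
          rcases eq_or_lt_of_le hz.2 with hzy | hzy
          · rw [hzy]; exact hupos
          · exact lt_trans hupos (hu_anti (hsub2 hz) ⟨hy1, hy2⟩ hzy)
        apply strictMonoOn_of_deriv_pos (convex_Icc _ _)
        · intro z hz
          have h0 : u z ≠ 0 := ne_of_gt (hupos' z hz)
          have : DifferentiableAt ℝ f z := by
            by_contra hnd
            exact h0 (deriv_zero_of_not_differentiableAt hnd)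
          exact this.continuousAt.continuousWithinAt
        · intro z hz
          rw [interior_Icc] at hz
          exact hupos' z ⟨le_of_lt hz.1, le_of_lt hz.2⟩
      have : f (xc t) < f y :=
        hmono (Set.left_mem_Icc.2 (le_of_lt hcon)) (Set.right_mem_Icc.2 (le_of_lt hcon)) hcon
      have hle := hxcmax y ⟨hy1, hy2⟩
      rw [hfdef] at this
      simp only at this
      linarith [hle, this]
    · intro huneg
      by_contra hcon
      push_neg at hcon
      -- y < xc t ; f is strictly antitone on [y, xc t]
      have hanti : StrictAntiOn f (Set.Icc y (xc t)) := by
        have hsub2 : Set.Icc y (xc t) ⊆ Set.Icc (x₀ - 1) t := by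
          intro z hz; exact ⟨le_trans hy1 hz.1, le_trans hz.2 hxcmem.2⟩
        have huneg' : ∀ z ∈ Set.Icc y (xc t), u z < 0 := by
          intro z hz
          rcases eq_or_lt_of_le hz.1 with hzy | hzy
          · rw [← hzy]; exact huneg
          · exact lt_trans (hu_anti ⟨hy1, hy2⟩ (hsub2 hz) hzy) huneg
        apply strictAntiOn_of_deriv_neg (convex_Icc _ _)
        · intro z hz
          have h0 : u z ≠ 0 := ne_of_lt (huneg' z hz)
          have : DifferentiableAt ℝ f z := by
            by_contra hnd
            exact h0 (deriv_zero_of_not_differentiableAt hnd)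
          exact this.continuousAt.continuousWithinAt
        · intro z hz
          rw [interior_Icc] at hz
          exact huneg' z ⟨le_of_lt hz.1, le_of_lt hz.2⟩
      have : f y > f (xc t) :=
        hanti (Set.left_mem_Icc.2 (le_of_lt hcon)) (Set.right_mem_Icc.2 (le_of_lt hcon)) hcon
      have hle := hxcmax y ⟨hy1, hy2⟩
      rw [hfdef] at this
      simp only at this
      linarith [hle, this]
  -- test point analysis
  have hyc_top : ∀ c : ℝ, 0 < c → Tendsto (fun t => c * (t * (PPf n t)⁻¹)) atTop atTop := by
    intro c hc
    exact (tendsto_x_div_PPf n).const_mul_atTop hc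
  have hrtransfer : ∀ c : ℝ, 0 < c → ∀ k, 1 ≤ k →
      Tendsto (fun t => iterLog k (c * (t * (PPf n t)⁻¹)) * (iterLog k t)⁻¹)
        atTop (nhds 1) := by
    intro c hc
    apply iterLog_ratio_transfer _ (hyc_top c hc)
    -- base case k = 1
    have hsum : Tendsto (fun t => ∑ k ∈ Finset.Icc 1 n, iterLog (k+1) t * (iterLog 1 t)⁻¹)
        atTop (nhds (∑ k ∈ Finset.Icc 1 n, (0:ℝ))) := by
      apply tendsto_finset_sum
      intro k hk
      exact tendsto_iterLog_div (k+1) 1 (by have := (Finset.mem_Icc.1 hk).1; omega)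
    rw [Finset.sum_const, smul_zero] at hsum
    have hinv1 : Tendsto (fun t : ℝ => (iterLog 1 t)⁻¹) atTop (nhds 0) :=
      (tendsto_iterLog 1).inv_tendsto_atTop
    have hbuild : Tendsto (fun t => Real.log c * (iterLog 1 t)⁻¹ + 1
        - ∑ k ∈ Finset.Icc 1 n, iterLog (k+1) t * (iterLog 1 t)⁻¹)
        atTop (nhds (Real.log c * 0 + 1 - 0)) :=
      ((hinv1.const_mul _).add tendsto_const_nhds).sub hsum
    rw [show (Real.log c * 0 + 1 - 0 : ℝ) = 1 by ring] at hbuild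
    apply hbuild.congr'
    filter_upwards [eventually_gt_atTop 1, iterLog_ev_all (n+1),
      PPf_ev_one_le n] with t ht hall hPP
    have ht0 : (0:ℝ) < t := by linarith
    have hPP0 : PPf n t ≠ 0 := by linarith
    have hl1 : iterLog 1 t ≠ 0 := by have := hall 1 (by omega); linarith
    have hyc0 : iterLog 1 (c * (t * (PPf n t)⁻¹)) = Real.log (c * (t * (PPf n t)⁻¹)) := rfl
    have hlPP : Real.log (PPf n t) = ∑ k ∈ Finset.Icc 1 n, iterLog (k+1) t := by
      rw [PPf, Real.log_prod]
      · apply Finset.sum_congr rfl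
        intro k hk
        rfl
      · intro k hk
        have := hall k (by have := (Finset.mem_Icc.1 hk).2; omega)
        linarith
    rw [hyc0, Real.log_mul (ne_of_gt hc) (by positivity),
      Real.log_mul (ne_of_gt ht0) (by positivity), Real.log_inv, hlPP]
    have hl1t : Real.log t = iterLog 1 t := rfl
    rw [hl1t, ← Finset.sum_mul]
    field_simp
    ring
  -- the master limit for the normalized slope at the test point
  have hPhi : ∀ c : ℝ, 0 < c →
      Tendsto (fun t => deriv (fun x => h x t) (c * (t * (PPf n t)⁻¹)) * α * (iterLog n t)⁻¹)
        atTop (nhds (1/c - 1)) := by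
    intro c hc
    set yc : ℝ → ℝ := fun t => c * (t * (PPf n t)⁻¹) with hycdef
    have hyc : Tendsto yc atTop atTop := hyc_top c hc
    set lnv : ℝ := if n = 1 then 1 else 0 with hlnvdef
    have hGcomp : Tendsto (fun t => g (yc t) * α * (iterLog n (yc t))⁻¹) atTop (nhds 1) :=
      N1.comp hyc
    have hAcomp : Tendsto (fun t => g1 (yc t) * (α * Qf n (yc t))) atTop (nhds 1) :=
      N2.comp hyc
    have hrn : Tendsto (fun t => iterLog n (yc t) * (iterLog n t)⁻¹) atTop (nhds 1) :=
      hrtransfer c hc n hn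
    have hlnQ : Tendsto (fun t => yc t * (Qf n (yc t))⁻¹) atTop (nhds lnv) :=
      (tendsto_x_div_Qf n hn).comp hyc
    have hinvn : Tendsto (fun t : ℝ => (iterLog n t)⁻¹) atTop (nhds 0) :=
      (tendsto_iterLog n).inv_tendsto_atTop
    have hRr : Tendsto (fun t => PPf (n-1) t * (PPf (n-1) (yc t))⁻¹) atTop (nhds 1) := by
      have hprod : Tendsto (fun t => ∏ k ∈ Finset.Icc 1 (n-1),
          (iterLog k t * (iterLog k (yc t))⁻¹)) atTop
          (nhds (∏ k ∈ Finset.Icc 1 (n-1), (1:ℝ))) := by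
        apply tendsto_finset_prod
        intro k hk
        have hk1 : 1 ≤ k := (Finset.mem_Icc.1 hk).1
        have := (hrtransfer c hc k hk1).inv₀ one_ne_zero
        rw [inv_one] at this
        apply this.congr'
        filter_upwards [iterLog_ev_gt k 1, hyc.eventually (iterLog_ev_gt k 1)] with t h1 h2
        rw [mul_inv, inv_inv, mul_comm]
      rw [Finset.prod_const_one] at hprod
      apply hprod.congr'
      filter_upwards with t
      rw [Finset.prod_mul_distrib, Finset.prod_inv_distrib]
      rfl
    have hTQ : Tendsto (fun t => t * (Qf n (yc t))⁻¹ * (iterLog n t)⁻¹) atTop (nhds (1/c)) := by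
      have hbase := hRr.const_mul (1/c)
      rw [mul_one] at hbase
      apply hbase.congr'
      filter_upwards [hyc.eventually (iterLog_ev_all (n+1)),
        hyc.eventually (PPf_ev_one_le (n-1)), hyc.eventually_gt_atTop 0,
        iterLog_ev_all (n+1), PPf_ev_one_le (n-1), PPf_ev_one_le n, eventually_gt_atTop 0]
        with t hycall hycPP hyc0 hall hPP1 hPPn ht0
      have e1 : Qf n (yc t) = yc t * PPf (n-1) (yc t) := by
        have := Qf_eq_PPf (n-1) (yc t)
        rwa [hsub] at this
      have e2 : PPf n t = PPf (n-1) t * iterLog n t := by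
        have := PPf_succ (n-1) t
        rwa [hsub] at this
      have hln : iterLog n t ≠ 0 := by have := hall n (by omega); linarith
      have hPPn0 : PPf n t ≠ 0 := by linarith
      have hPP10 : PPf (n-1) t ≠ 0 := by linarith
      have hPPyc0 : PPf (n-1) (yc t) ≠ 0 := by linarith
      have hycne : yc t ≠ 0 := ne_of_gt hyc0
      have hyrel : yc t * PPf n t = c * t := by
        have hyct : yc t = c * (t * (PPf n t)⁻¹) := rfl
        rw [hyct]
        field_simp
      rw [e2] at hyrel
      rw [e1]
      field_simp
      nlinarith [hyrel, mul_pos (mul_pos hyc0 (show (0:ℝ) < PPf (n-1) (yc t) by linarith))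
        (show (0:ℝ) < PPf (n-1) t * iterLog n t by
          nlinarith [hall n (by omega : n ≤ n+1)])]
    have hbuild : Tendsto (fun t =>
        (g1 (yc t) * (α * Qf n (yc t)))
          * (t * (Qf n (yc t))⁻¹ * (iterLog n t)⁻¹
            - (yc t * (Qf n (yc t))⁻¹) * (iterLog n t)⁻¹)
        - (g (yc t) * α * (iterLog n (yc t))⁻¹) * (iterLog n (yc t) * (iterLog n t)⁻¹))
        atTop (nhds (1 * (1/c - lnv * 0) - 1 * 1)) :=
      (hAcomp.mul (hTQ.sub (hlnQ.mul hinvn))).sub (hGcomp.mul hrn)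
    rw [show (1 * (1/c - lnv * 0) - 1 * 1 : ℝ) = 1/c - 1 by ring] at hbuild
    apply hbuild.congr'
    filter_upwards [hyc.eventually_ge_atTop R0, hyc.eventually (iterLog_ev_all (n+1)),
      hyc.eventually (Qf_ev_one_le n)] with t hycR0 hycall hycQ
    rw [huderiv t (yc t) hycR0]
    have hlnyc : iterLog n (yc t) ≠ 0 := by have := hycall n (by omega); linarith
    have hQyc : Qf n (yc t) ≠ 0 := by linarith
    have key1 : (g1 (yc t) * (α * Qf n (yc t)))
        * (t * (Qf n (yc t))⁻¹ * (iterLog n t)⁻¹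
          - (yc t * (Qf n (yc t))⁻¹) * (iterLog n t)⁻¹)
        = (t - yc t) * g1 (yc t) * α * (iterLog n t)⁻¹ := by
      have hc1 : Qf n (yc t) * (Qf n (yc t))⁻¹ = 1 := mul_inv_cancel₀ hQyc
      calc (g1 (yc t) * (α * Qf n (yc t)))
          * (t * (Qf n (yc t))⁻¹ * (iterLog n t)⁻¹
            - (yc t * (Qf n (yc t))⁻¹) * (iterLog n t)⁻¹)
          = (Qf n (yc t) * (Qf n (yc t))⁻¹)
            * ((t - yc t) * g1 (yc t) * α * (iterLog n t)⁻¹) := by ring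
        _ = (t - yc t) * g1 (yc t) * α * (iterLog n t)⁻¹ := by rw [hc1]; ring
    have key2 : (g (yc t) * α * (iterLog n (yc t))⁻¹) * (iterLog n (yc t) * (iterLog n t)⁻¹)
        = g (yc t) * α * (iterLog n t)⁻¹ := by
      have hc2 : iterLog n (yc t) * (iterLog n (yc t))⁻¹ = 1 := mul_inv_cancel₀ hlnyc
      calc (g (yc t) * α * (iterLog n (yc t))⁻¹) * (iterLog n (yc t) * (iterLog n t)⁻¹)
          = (iterLog n (yc t) * (iterLog n (yc t))⁻¹) * (g (yc t) * α * (iterLog n t)⁻¹) := by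
            ring
        _ = g (yc t) * α * (iterLog n t)⁻¹ := by rw [hc2]; ring
    rw [key1, key2]
    ring
  -- sandwich bounds on xc
  have hycle : ∀ c : ℝ, 0 < c → ∀ᶠ t in atTop, c * (t * (PPf n t)⁻¹) ≤ t := by
    intro c hc
    filter_upwards [(tendsto_PPf_atTop n hn).eventually_ge_atTop c, eventually_gt_atTop 0,
      PPf_ev_one_le n] with t h1 h2 h3
    have hPP0 : PPf n t ≠ 0 := by linarith
    calc c * (t * (PPf n t)⁻¹) ≤ PPf n t * (t * (PPf n t)⁻¹) := by
          apply mul_le_mul_of_nonneg_right h1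
          positivity
      _ = t * (PPf n t * (PPf n t)⁻¹) := by ring
      _ = t := by rw [mul_inv_cancel₀ hPP0, mul_one]
  have hsandL : ∀ c : ℝ, 0 < c → c < 1 →
      ∀ᶠ t in atTop, c * (t * (PPf n t)⁻¹) ≤ xc t := by
    intro c hc hc1
    have hposlim : (0:ℝ) < 1/c - 1 := by
      rw [sub_pos, lt_div_iff₀ hc, one_mul]
      exact hc1
    have hev := (hPhi c hc).eventually (eventually_gt_nhds hposlim)
    filter_upwards [hev, eventually_ge_atTop t₀,
      (hyc_top c hc).eventually_ge_atTop (x₀ - 1), hycle c hc,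
      iterLog_ev_gt n 0] with t hΦ ht hyx hyt hln
    have hinv : 0 < (iterLog n t)⁻¹ := by positivity
    have hd : 0 < deriv (fun x => h x t) (c * (t * (PPf n t)⁻¹)) := by
      by_contra hnd
      push_neg at hnd
      have h1 : deriv (fun x => h x t) (c * (t * (PPf n t)⁻¹)) * α ≤ 0 :=
        mul_nonpos_iff.2 (Or.inr ⟨hnd, hα.le⟩)
      have h2 : deriv (fun x => h x t) (c * (t * (PPf n t)⁻¹)) * α * (iterLog n t)⁻¹ ≤ 0 :=
        mul_nonpos_iff.2 (Or.inr ⟨h1, hinv.le⟩)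
      linarith
    exact (key t ht _ hyx hyt).1 hd
  have hsandR : ∀ c : ℝ, 1 < c →
      ∀ᶠ t in atTop, xc t ≤ c * (t * (PPf n t)⁻¹) := by
    intro c hc1
    have hc : (0:ℝ) < c := by linarith
    have hneglim : 1/c - 1 < 0 := by
      rw [sub_neg, div_lt_iff₀ hc, one_mul]
      exact hc1
    have hev := (hPhi c hc).eventually (eventually_lt_nhds hneglim)
    filter_upwards [hev, eventually_ge_atTop t₀,
      (hyc_top c hc).eventually_ge_atTop (x₀ - 1), hycle c hc,
      iterLog_ev_gt n 0] with t hΦ ht hyx hyt hln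
    have hinv : 0 < (iterLog n t)⁻¹ := by positivity
    have hd : deriv (fun x => h x t) (c * (t * (PPf n t)⁻¹)) < 0 := by
      by_contra hnd
      push_neg at hnd
      have h2 : 0 ≤ deriv (fun x => h x t) (c * (t * (PPf n t)⁻¹)) * α * (iterLog n t)⁻¹ :=
        mul_nonneg (mul_nonneg hnd hα.le) hinv.le
      linarith
    exact (key t ht _ hyx hyt).2 hd
  -- xc tends to infinity
  have hxcR : Tendsto xc atTop atTop := by
    apply tendsto_atTop_mono' atTop (hsandL (1/2) (by norm_num) (by norm_num))
    exact hyc_top (1/2) (by norm_num)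
  -- main asymptotic for xc
  have hF1 : Tendsto (fun t => xc t * PPf n t / t) atTop (nhds 1) := by
    rw [tendsto_order]
    constructor
    · intro a ha
      set ε : ℝ := min (1/2) ((1-a)/2) with hεdef
      have hε0 : 0 < ε := by
        apply lt_min (by norm_num)
        linarith
      have hε2 : ε ≤ (1-a)/2 := min_le_right _ _
      have hε1 : ε ≤ 1/2 := min_le_left _ _
      filter_upwards [hsandL (1-ε) (by linarith) (by linarith), eventually_gt_atTop 0,
        PPf_ev_one_le n] with t hle ht hPP
      have hPP0 : PPf n t ≠ 0 := by linarith
      have heq : (1-ε) * (t * (PPf n t)⁻¹) * PPf n t / t = 1-ε := by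
        field_simp
      calc a < 1-ε := by linarith
        _ = (1-ε) * (t * (PPf n t)⁻¹) * PPf n t / t := heq.symm
        _ ≤ xc t * PPf n t / t := by
            gcongr
    · intro b hb
      set ε : ℝ := min (1/2) ((b-1)/2) with hεdef
      have hε0 : 0 < ε := by
        apply lt_min (by norm_num)
        linarith
      have hε2 : ε ≤ (b-1)/2 := min_le_right _ _
      filter_upwards [hsandR (1+ε) (by linarith), eventually_gt_atTop 0,
        PPf_ev_one_le n] with t hle ht hPP
      have hPP0 : PPf n t ≠ 0 := by linarith
      have heq : (1+ε) * (t * (PPf n t)⁻¹) * PPf n t / t = 1+ε := by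
        field_simp
      calc xc t * PPf n t / t ≤ (1+ε) * (t * (PPf n t)⁻¹) * PPf n t / t := by
            gcongr
        _ = 1+ε := heq
        _ < b := by linarith
  -- slow variation along xc
  have hrk : ∀ k, 1 ≤ k →
      Tendsto (fun t => iterLog k (xc t) * (iterLog k t)⁻¹) atTop (nhds 1) := by
    intro k hk
    obtain ⟨Rk, hRk⟩ := iterLog_exists_mono k
    have hl := hrtransfer (1/2) (by norm_num) k hk
    have hr := hrtransfer 2 (by norm_num) k hk
    apply tendsto_of_tendsto_of_tendsto_of_le_of_le' hl hr
    · filter_upwards [hsandL (1/2) (by norm_num) (by norm_num),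
        (hyc_top (1/2) (by norm_num)).eventually_ge_atTop Rk,
        iterLog_ev_gt k 0] with t h1 h2 h3
      have : iterLog k ((1/2) * (t * (PPf n t)⁻¹)) ≤ iterLog k (xc t) := hRk _ _ h2 h1
      apply mul_le_mul_of_nonneg_right this
      positivity
    · filter_upwards [hsandR 2 (by norm_num), hsandL (1/2) (by norm_num) (by norm_num),
        (hyc_top (1/2) (by norm_num)).eventually_ge_atTop Rk,
        iterLog_ev_gt k 0] with t h1 h2 h3 h4
      have : iterLog k (xc t) ≤ iterLog k (2 * (t * (PPf n t)⁻¹)) :=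
        hRk _ _ (le_trans h3 h2) h1
      apply mul_le_mul_of_nonneg_right this
      positivity
  have hW1 : Tendsto (fun t => t * (xc t * PPf n t)⁻¹) atTop (nhds 1) := by
    have := hF1.inv₀ one_ne_zero
    rw [inv_one] at this
    apply this.congr'
    filter_upwards with t
    rw [div_eq_mul_inv, mul_inv, inv_inv, mul_comm]
  have hW2 : Tendsto (fun t => PPf (n-1) t * (PPf (n-1) (xc t))⁻¹) atTop (nhds 1) := by
    have hprod : Tendsto (fun t => ∏ k ∈ Finset.Icc 1 (n-1),
        (iterLog k t * (iterLog k (xc t))⁻¹)) atTop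
        (nhds (∏ k ∈ Finset.Icc 1 (n-1), (1:ℝ))) := by
      apply tendsto_finset_prod
      intro k hk
      have hk1 : 1 ≤ k := (Finset.mem_Icc.1 hk).1
      have := (hrk k hk1).inv₀ one_ne_zero
      rw [inv_one] at this
      apply this.congr'
      filter_upwards with t
      rw [mul_inv, inv_inv, mul_comm]
    rw [Finset.prod_const_one] at hprod
    apply hprod.congr'
    filter_upwards with t
    rw [Finset.prod_mul_distrib, Finset.prod_inv_distrib]
    rfl
  have hW3 : Tendsto (fun t => (PPf (n-1) (xc t) * iterLog n t)⁻¹) atTop (nhds 0) := by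
    have hub : Tendsto (fun t : ℝ => (iterLog n t)⁻¹) atTop (nhds 0) :=
      (tendsto_iterLog n).inv_tendsto_atTop
    apply tendsto_of_tendsto_of_tendsto_of_le_of_le'
      (tendsto_const_nhds : Tendsto (fun _ : ℝ => (0:ℝ)) atTop (nhds 0)) hub
    · filter_upwards [hxcR.eventually (PPf_ev_one_le (n-1)), iterLog_ev_gt n 0]
        with t h1 h2
      positivity
    · filter_upwards [hxcR.eventually (PPf_ev_one_le (n-1)), iterLog_ev_gt n 1]
        with t h1 h2
      rw [mul_inv]
      have h3 : (iterLog n t)⁻¹ ≥ 0 := by positivity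
      calc (PPf (n-1) (xc t))⁻¹ * (iterLog n t)⁻¹ ≤ 1 * (iterLog n t)⁻¹ := by
            apply mul_le_mul_of_nonneg_right _ h3
            rw [inv_le_one_iff₀]
            right; exact h1
        _ = (iterLog n t)⁻¹ := one_mul _
  have hV : Tendsto (fun t => xc t * t⁻¹) atTop (nhds 0) := by
    have hPPinv : Tendsto (fun t => (PPf n t)⁻¹) atTop (nhds 0) :=
      (tendsto_PPf_atTop n hn).inv_tendsto_atTop
    have := hF1.mul hPPinv
    rw [mul_zero] at this
    apply this.congr'
    filter_upwards [PPf_ev_one_le n] with t hPP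
    have hPP0 : PPf n t ≠ 0 := by linarith
    calc xc t * PPf n t / t * (PPf n t)⁻¹
        = (PPf n t * (PPf n t)⁻¹) * (xc t * t⁻¹) := by rw [div_eq_mul_inv]; ring
      _ = xc t * t⁻¹ := by rw [mul_inv_cancel₀ hPP0, one_mul]
  -- eventual formulas for κ and d
  have hκform : ∀ᶠ t in atTop, κ t = 2 * g1 (xc t) - (t - xc t) * g2 (xc t) := by
    filter_upwards [hxcR.eventually_gt_atTop R0] with t ht
    rw [hκ t, hD2 t (xc t) ht]
    ring
  have hdform : ∀ᶠ t in atTop,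
      d t = (1/6) * ((t - xc t) * g3 (xc t) - 3 * g2 (xc t)) := by
    filter_upwards [hxcR.eventually_gt_atTop R0] with t ht
    rw [hd t, hD3 t (xc t) ht]
  -- composed limits along xc
  have hA : Tendsto (fun t => g1 (xc t) * (α * Qf n (xc t))) atTop (nhds 1) := N2.comp hxcR
  have hB : Tendsto (fun t => g2 (xc t) * (α * (xc t * Qf n (xc t)))) atTop (nhds (-1)) :=
    N3.comp hxcR
  have hC : Tendsto (fun t => g3 (xc t) * (α * ((xc t)^2 * Qf n (xc t)))) atTop (nhds 2) :=
    N4.comp hxcR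
  -- common eventual nonvanishing bundle
  have hNZ : ∀ᶠ t in atTop, 0 < xc t ∧ 1 ≤ PPf (n-1) (xc t) ∧ 1 ≤ PPf (n-1) t
      ∧ 1 ≤ PPf n t ∧ 1 < iterLog n t ∧ 0 < t ∧ 1 ≤ Qf n (xc t) := by
    filter_upwards [hxcR.eventually_gt_atTop 0, hxcR.eventually (PPf_ev_one_le (n-1)),
      PPf_ev_one_le (n-1), PPf_ev_one_le n, iterLog_ev_gt n 1, eventually_gt_atTop 0,
      hxcR.eventually (Qf_ev_one_le n)] with t a b c dd e f gg
    exact ⟨a, b, c, dd, e, f, gg⟩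
  -- κ normalized limit
  have hKlim : Tendsto (fun t => κ t * (α * xc t) * (iterLog n t)⁻¹) atTop (nhds 1) := by
    have hbuild : Tendsto (fun t =>
        2 * (g1 (xc t) * (α * Qf n (xc t))) * (PPf (n-1) (xc t) * iterLog n t)⁻¹
        - (g2 (xc t) * (α * (xc t * Qf n (xc t))))
          * ((t * (xc t * PPf n t)⁻¹) * (PPf (n-1) t * (PPf (n-1) (xc t))⁻¹)
            - (PPf (n-1) (xc t) * iterLog n t)⁻¹)) atTop
        (nhds (2 * 1 * 0 - (-1) * (1 * 1 - 0))) :=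
      ((hA.const_mul 2).mul hW3).sub (hB.mul ((hW1.mul hW2).sub hW3))
    rw [show (2 * 1 * 0 - (-1) * (1 * 1 - 0) : ℝ) = 1 by ring] at hbuild
    apply hbuild.congr'
    filter_upwards [hκform, hNZ] with t hk hz
    obtain ⟨z1, z2, z3, z4, z5, z6, z7⟩ := hz
    have e1 : Qf n (xc t) = xc t * PPf (n-1) (xc t) := by
      have := Qf_eq_PPf (n-1) (xc t)
      rwa [hsub] at this
    have e2 : PPf n t = PPf (n-1) t * iterLog n t := by
      have := PPf_succ (n-1) t
      rwa [hsub] at this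
    have n1 : xc t ≠ 0 := ne_of_gt z1
    have n2 : PPf (n-1) (xc t) ≠ 0 := by linarith
    have n3 : PPf (n-1) t ≠ 0 := by linarith
    have n5 : iterLog n t ≠ 0 := by linarith
    have n6 : t ≠ 0 := ne_of_gt z6
    rw [hk, e1, e2]
    field_simp
  -- Conclusion 3
  have Con3 : Tendsto (fun t => κ t / (iterLog n t / (α * xc t))) atTop (nhds 1) := by
    apply hKlim.congr'
    filter_upwards with t
    rw [div_div_eq_mul_div, div_eq_mul_inv]
  -- Conclusion 1
  have Con1 : Tendsto (fun t => xc t / (t * ∏ k ∈ Finset.Icc 1 n, (iterLog k t)⁻¹))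
      atTop (nhds 1) := by
    apply hF1.congr'
    filter_upwards with t
    rw [show (∏ k ∈ Finset.Icc 1 n, (iterLog k t)⁻¹) = (PPf n t)⁻¹ from
      Finset.prod_inv_distrib (f := fun k => iterLog k t), div_eq_mul_inv, div_eq_mul_inv, mul_inv, inv_inv]
    ring
  -- Conclusion 2
  have Con2 : Tendsto (fun t => κ t /
      (iterLog n t / (α * t) * ∏ k ∈ Finset.Icc 1 n, iterLog k t)) atTop (nhds 1) := by
    have hbuild := hKlim.mul hW1
    rw [mul_one] at hbuild
    apply hbuild.congr'
    filter_upwards [hNZ] with t hz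
    obtain ⟨z1, z2, z3, z4, z5, z6, z7⟩ := hz
    have n1 : xc t ≠ 0 := ne_of_gt z1
    have n4 : PPf n t ≠ 0 := by linarith
    have n5 : iterLog n t ≠ 0 := by linarith
    have n6 : t ≠ 0 := ne_of_gt z6
    rw [show (∏ k ∈ Finset.Icc 1 n, iterLog k t) = PPf n t from rfl]
    field_simp
  -- d normalized limit
  have hDlim : Tendsto (fun t =>
      (1/2) * (g3 (xc t) * (α * ((xc t)^2 * Qf n (xc t)))) * (1 - xc t * t⁻¹)
        * (t * (xc t * PPf n t)⁻¹)^3 * (PPf (n-1) t * (PPf (n-1) (xc t))⁻¹)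
      - (3/2) * (g2 (xc t) * (α * (xc t * Qf n (xc t)))) * (t * (xc t * PPf n t)⁻¹)^2
        * (PPf (n-1) (xc t) * iterLog n t)⁻¹) atTop
      (nhds ((1/2) * 2 * (1 - 0) * 1^3 * 1 - (3/2) * (-1) * 1^2 * 0)) := by
    exact ((((hC.const_mul (1/2)).mul (tendsto_const_nhds.sub hV)).mul
      (hW1.pow 3)).mul hW2).sub (((hB.const_mul (3/2)).mul (hW1.pow 2)).mul hW3)
  -- Conclusion 4
  have Con4 : Tendsto (fun t => d t /
      (iterLog n t / (3 * α * t ^ 2) * ∏ k ∈ Finset.Icc 1 n, (iterLog k t) ^ 2))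
      atTop (nhds 1) := by
    rw [show ((1/2) * 2 * (1 - 0) * 1^3 * 1 - (3/2) * (-1) * 1^2 * 0 : ℝ) = 1 by ring]
      at hDlim
    apply hDlim.congr'
    filter_upwards [hdform, hNZ] with t hdt hz
    obtain ⟨z1, z2, z3, z4, z5, z6, z7⟩ := hz
    have e1 : Qf n (xc t) = xc t * PPf (n-1) (xc t) := by
      have := Qf_eq_PPf (n-1) (xc t)
      rwa [hsub] at this
    have e2 : PPf n t = PPf (n-1) t * iterLog n t := by
      have := PPf_succ (n-1) t
      rwa [hsub] at this
    have n1 : xc t ≠ 0 := ne_of_gt z1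
    have n2 : PPf (n-1) (xc t) ≠ 0 := by linarith
    have n3 : PPf (n-1) t ≠ 0 := by linarith
    have n5 : iterLog n t ≠ 0 := by linarith
    have n6 : t ≠ 0 := ne_of_gt z6
    rw [show (∏ k ∈ Finset.Icc 1 n, (iterLog k t)^2) = (PPf n t)^2 from
      Finset.prod_pow _ _ _, hdt, e1, e2]
    field_simp
    ring
  exact ⟨Con1, Con2, Con3, Con4⟩
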